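/- A subset 𝒳 of [ℕ]^ω is completely Ramsey if and only if 𝒳 has the property of Baire with respect to the Ellentuck topology. -/

import Mathlib

/-- `s` is an initial segment of `X`. -/
def InitSeg (s : Finset ℕ) (X : Set ℕ) : Prop :=
  ↑s ⊆ X ∧ ∀ x ∈ X, x ∉ s → ∀ a ∈ s, a < x

/-- The Baire space `[ℕ]^ω` of infinite subsets of `ℕ`. -/
abbrev BaireSp := {X : Set ℕ // X.Infinite}

/-- The Ellentuck basic set `[s, Y] = {Z ∈ [Y]^ω : s ⊑ Z}`. -/
def ellCube (s : Finset ℕ) (Y : BaireSp) : Set BaireSp :=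
  {Z : BaireSp | Z.1 ⊆ Y.1 ∧ InitSeg s Z.1}

/-- The Ellentuck topology on `[ℕ]^ω`, generated by the sets `[s, X]`. -/
def ellTop : TopologicalSpace BaireSp :=
  .generateFrom {U | ∃ (s : Finset ℕ) (X : BaireSp), U = ellCube s X}

/-- `𝒳` is completely Ramsey. -/
def CompletelyRamsey (𝒳 : Set BaireSp) : Prop :=
  ∀ (s : Finset ℕ) (X : BaireSp), InitSeg s X.1 →
    ∃ Y : BaireSp, Y.1 ⊆ X.1 ∧ InitSeg s Y.1 ∧
      (ellCube s Y ⊆ 𝒳 ∨ ellCube s Y ∩ 𝒳 = ∅)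

/-- `𝒳` has the property of Baire with respect to the Ellentuck topology:
its symmetric difference with some Ellentuck-open set is Ellentuck-meager. -/
def EllBaireProperty (𝒳 : Set BaireSp) : Prop :=
  ∃ U : Set BaireSp, @IsOpen BaireSp ellTop U ∧ @IsMeagre BaireSp ellTop (symmDiff 𝒳 U)
/-!
Write `Y / t` for the elements of `Y` above `t`, and say that `Y` *accepts* `u` (for a family `𝒳`)
when `[u, u ∪ Y] ⊆ 𝒳`, and *rejects* `u` when no infinite subset of `Y` accepts it. Galvin–Prikry
fusion refines any infinite `X` to a set `Y ⊆ X` such that `Y / t` decides `s ∪ t` for every finite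
`t ⊆ Y`. For an open `𝒪`, if `Y` rejects `s` then only finitely many one-point extensions of a
rejected `s ∪ t` are accepted, so after a second thinning every `s ∪ t` is rejected; since
membership of `Z` in `𝒪` is always witnessed by an initial segment of `Z` that `Z` accepts, this
forces `[s, s ∪ Y] ∩ 𝒪 = ∅`. Thus open sets are completely Ramsey. Applied to the complement of the
closure, this makes nowhere dense sets Ramsey null, and one more fusion handles countable unions,
hence meagre sets. A completely Ramsey set differs from its interior by a Ramsey null, hence nowhere
dense, set; conversely, if `𝒳 ∆ U` is meagre with `U` open, shrink first to avoid `𝒳 ∆ U` and then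
to decide `U`.
-/

open Set

attribute [local instance] ellTop

def above (t : Finset ℕ) (Y : Set ℕ) : Set ℕ := {y ∈ Y | ∀ a ∈ t, a < y}

section Above

variable {t : Finset ℕ} {Y Y' : Set ℕ}

lemma above_subset : above t Y ⊆ Y := sep_subset _ _

lemma above_mono (h : Y ⊆ Y') : above t Y ⊆ above t Y' := fun _ hy => ⟨h hy.1, hy.2⟩

@[simp] lemma above_empty : above ∅ Y = Y := by simp [above]

lemma above_insert (m : ℕ) : above (insert m t) Y = above t Y ∩ Ioi m := by
  ext y
  simp only [above, Finset.mem_insert, forall_eq_or_imp, mem_sep_iff, mem_inter_iff, mem_Ioi]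
  tauto

lemma Set.Infinite.above (hY : Y.Infinite) : (above t Y).Infinite :=
  (hY.sdiff (finite_Iic (t.sup id))).mono fun _ hy =>
    ⟨hy.1, fun _ ha => (Finset.le_sup (f := id) ha).trans_lt (not_le.1 hy.2)⟩

end Above

namespace InitSeg

variable {s t u : Finset ℕ} {Y Z : Set ℕ}

lemma union (hs : InitSeg s Z) (ht : InitSeg t Z) : InitSeg (s ∪ t) Z := by
  refine ⟨by simpa using union_subset hs.1 ht.1, fun x hx hxst a ha => ?_⟩
  rw [Finset.mem_union, not_or] at hxst
  rcases Finset.mem_union.1 ha with ha | ha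
  exacts [hs.2 x hx hxst.1 a ha, ht.2 x hx hxst.2 a ha]

lemma restrict (h : InitSeg s Z) (hsu : s ⊆ u) (huZ : ↑u ⊆ Z) : InitSeg s ↑u :=
  ⟨by exact_mod_cast hsu, fun x hx hxs a ha => h.2 x (huZ hx) hxs a ha⟩

lemma trans (h₁ : InitSeg s ↑u) (h₂ : InitSeg u Z) : InitSeg s Z := by
  refine ⟨h₁.1.trans h₂.1, fun x hx hxs a ha => ?_⟩
  by_cases hxu : x ∈ u
  · exact h₁.2 x hxu hxs a ha
  · exact h₂.2 x hx hxu a (h₁.1 ha)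

lemma diff_subset_above (h : InitSeg (s ∪ t) Z) (hZ : Z ⊆ ↑s ∪ Y) :
    Z \ ↑(s ∪ t) ⊆ above t Y := by
  rintro x ⟨hx, hxst⟩
  rw [Finset.mem_coe, Finset.mem_union, not_or] at hxst
  exact ⟨(hZ hx).resolve_left hxst.1,
    fun a ha => h.2 x hx (Finset.mem_union.not.2 (not_or.2 hxst)) a (Finset.mem_union_right _ ha)⟩

lemma exists_extend (hs : InitSeg s Z) (hZ : Z.Infinite) (k : ℕ) :
    ∃ t : Finset ℕ, ↑t ⊆ Z \ ↑s ∧ k ≤ t.sup id ∧ InitSeg (s ∪ t) Z := by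
  classical
  obtain ⟨z, hz, hkz⟩ := (hZ.sdiff s.finite_toSet).exists_gt k
  set t := (Finset.range (z + 1)).filter (· ∈ Z \ ↑s)
  have htZ : ↑t ⊆ Z \ ↑s := fun a ha => (Finset.mem_filter.1 ha).2
  have hzt : z ∈ t := Finset.mem_filter.2 ⟨Finset.self_mem_range_succ z, hz⟩
  refine ⟨t, htZ, hkz.le.trans (Finset.le_sup (f := id) hzt), ?_, fun x hx hxst a ha => ?_⟩
  · simpa using union_subset hs.1 fun a ha => (htZ ha).1
  rw [Finset.mem_union, not_or] at hxst
  rcases Finset.mem_union.1 ha with ha | ha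
  · exact hs.2 x hx hxst.1 a ha
  · have hxz : z < x := not_le.1 fun hxz =>
      hxst.2 (Finset.mem_filter.2 ⟨Finset.mem_range_succ_iff.2 hxz, hx, hxst.1⟩)
    exact (Finset.mem_range_succ_iff.1 (Finset.mem_filter.1 ha).1).trans_lt hxz

end InitSeg

lemma initSeg_union_of_forall_lt {s : Finset ℕ} {Y : Set ℕ} (h : ∀ y ∈ Y, ∀ a ∈ s, a < y) :
    InitSeg s (↑s ∪ Y) :=
  ⟨subset_union_left, fun x hx hxs => h x (hx.resolve_left hxs)⟩

section Cubes

lemma isOpen_ellCube (s : Finset ℕ) (Y : BaireSp) : IsOpen (ellCube s Y) :=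
  TopologicalSpace.GenerateOpen.basic _ ⟨s, Y, rfl⟩

lemma isTopologicalBasis_ellCube :
    TopologicalSpace.IsTopologicalBasis {U | ∃ (s : Finset ℕ) (X : BaireSp), U = ellCube s X} := by
  refine ⟨?_, eq_univ_of_forall fun Z => ⟨ellCube ∅ Z, ⟨∅, Z, rfl⟩, subset_rfl, by simp [InitSeg]⟩,
    rfl⟩
  rintro _ ⟨s₁, X₁, rfl⟩ _ ⟨s₂, X₂, rfl⟩ Z ⟨⟨hZX₁, hs₁⟩, hZX₂, hs₂⟩
  classical
  have hs := hs₁.union hs₂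
  refine ⟨ellCube (s₁ ∪ s₂) Z, ⟨s₁ ∪ s₂, Z, rfl⟩, ⟨subset_rfl, hs⟩, fun W ⟨hWZ, hW⟩ => ?_⟩
  exact ⟨⟨hWZ.trans hZX₁, (hs₁.restrict Finset.subset_union_left hs.1).trans hW⟩,
    hWZ.trans hZX₂, (hs₂.restrict Finset.subset_union_right hs.1).trans hW⟩

lemma mem_ellCube_union {t : Finset ℕ} {Y : Set ℕ} (hY : Y.Infinite)
    (h : ∀ y ∈ Y, ∀ a ∈ t, a < y) :
    (⟨↑t ∪ Y, hY.mono subset_union_right⟩ : BaireSp) ∈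
      ellCube t ⟨↑t ∪ Y, hY.mono subset_union_right⟩ :=
  ⟨subset_rfl, initSeg_union_of_forall_lt h⟩

end Cubes

section AcceptReject

variable (𝒳 : Set BaireSp)

def Accepts (u : Finset ℕ) (Y : Set ℕ) : Prop :=
  ∀ Z : BaireSp, InitSeg u Z.1 → Z.1 ⊆ ↑u ∪ Y → Z ∈ 𝒳

def Rejects (u : Finset ℕ) (Y : Set ℕ) : Prop :=
  ∀ V ⊆ Y, V.Infinite → ¬ Accepts 𝒳 u V

variable {𝒳} {𝒴 : Set BaireSp} {u : Finset ℕ} {Y Y' : Set ℕ}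

lemma accepts_iff_ellCube_subset (hY : Y.Infinite) :
    Accepts 𝒳 u Y ↔ ellCube u ⟨↑u ∪ Y, hY.mono subset_union_right⟩ ⊆ 𝒳 :=
  ⟨fun h Z hZ => h Z hZ.2 hZ.1, fun h _ hZu hZY => h ⟨hZY, hZu⟩⟩

lemma Accepts.anti (h : Accepts 𝒳 u Y) (hY : Y' ⊆ Y) : Accepts 𝒳 u Y' :=
  fun Z hZu hZY => h Z hZu (hZY.trans (union_subset_union_right _ hY))

lemma Accepts.mono (h : Accepts 𝒳 u Y) (h𝒳 : 𝒳 ⊆ 𝒴) : Accepts 𝒴 u Y :=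
  fun Z hZu hZY => h𝒳 (h Z hZu hZY)

lemma Accepts.inter (h : Accepts 𝒳 u Y) (h' : Accepts 𝒴 u Y) : Accepts (𝒳 ∩ 𝒴) u Y :=
  fun Z hZu hZY => ⟨h Z hZu hZY, h' Z hZu hZY⟩

lemma Accepts.interior (h : Accepts 𝒳 u Y) (hY : Y.Infinite) : Accepts (interior 𝒳) u Y :=
  (accepts_iff_ellCube_subset hY).2 <|
    interior_maximal ((accepts_iff_ellCube_subset hY).1 h) (isOpen_ellCube _ _)

lemma Rejects.anti (h : Rejects 𝒳 u Y) (hY : Y' ⊆ Y) : Rejects 𝒳 u Y' :=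
  fun V hV => h V (hV.trans hY)

/-- The set `M` of such `m` would accept `u` itself: `W ∈ [u, u ∪ M]` lies in the cube of
`insert m u` above `m`, for `m` the least element of `W \ u`. -/
lemma Rejects.finite_setOf_accepts (h : Rejects 𝒳 u Y) :
    {m ∈ Y | Accepts 𝒳 (insert m u) (Y ∩ Ioi m)}.Finite := by
  refine not_infinite.1 fun hinf => h _ (sep_subset _ _) hinf fun W hWu hWM => ?_
  have hne : (W.1 \ ↑u).Nonempty := (W.2.sdiff u.finite_toSet).nonempty
  set m := sInf (W.1 \ ↑u)
  have hm : m ∈ W.1 \ ↑u := Nat.sInf_mem hne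
  have hmin : ∀ x ∈ W.1, x ∉ u → m ≤ x := fun x hx hxu => Nat.sInf_le ⟨hx, hxu⟩
  have hmM := (hWM hm.1).resolve_left hm.2
  refine hmM.2 W ⟨by simpa using insert_subset hm.1 hWu.1, fun x hx hxmu a ha => ?_⟩ fun x hx => ?_
  · rw [Finset.mem_insert, not_or] at hxmu
    rcases Finset.mem_insert.1 ha with rfl | ha
    · exact (hmin x hx hxmu.2).lt_of_ne' hxmu.1
    · exact hWu.2 x hx hxmu.2 a ha
  · by_cases hxmu : x ∈ insert m u
    · exact Or.inl hxmu
    · rw [Finset.mem_insert, not_or] at hxmu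
      exact Or.inr ⟨((hWM hx).resolve_left hxmu.2).1, (hmin x hx hxmu.2).lt_of_ne' hxmu.1⟩

lemma IsOpen.exists_accepts (h𝒳 : IsOpen 𝒳) {Z : BaireSp} (hZ : Z ∈ 𝒳) {s : Finset ℕ}
    (hs : InitSeg s Z.1) : ∃ u : Finset ℕ, s ⊆ u ∧ InitSeg u Z.1 ∧ Accepts 𝒳 u Z.1 := by
  classical
  obtain ⟨_, ⟨t, W, rfl⟩, ⟨hZW, ht⟩, hW⟩ :=
    isTopologicalBasis_ellCube.exists_subset_of_mem_open hZ h𝒳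
  have hu := hs.union ht
  refine ⟨s ∪ t, Finset.subset_union_left, hu, fun Z' hZ' hZ'Z => hW ⟨?_, ?_⟩⟩
  · exact (hZ'Z.trans (union_subset hu.1 subset_rfl)).trans hZW
  · exact (ht.restrict Finset.subset_union_right hu.1).trans hZ'

end AcceptReject

section Fusion

lemma exists_forall_mem_of_dense {ι : Type*} {P : ι → Set ℕ → Prop}
    (hmono : ∀ i ⦃Y Y' : Set ℕ⦄, Y' ⊆ Y → P i Y → P i Y')
    (hdense : ∀ i (X : Set ℕ), X.Infinite → ∃ Y ⊆ X, Y.Infinite ∧ P i Y)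
    (I : Finset ι) {X : Set ℕ} (hX : X.Infinite) :
    ∃ Y ⊆ X, Y.Infinite ∧ ∀ i ∈ I, P i Y := by
  classical
  induction I using Finset.induction_on generalizing X with
  | empty => exact ⟨X, subset_rfl, hX, by simp⟩
  | insert i I _ ih =>
    obtain ⟨Y₁, hY₁X, hY₁, hP⟩ := hdense i X hX
    obtain ⟨Y, hYY₁, hY, hPI⟩ := ih hY₁
    exact ⟨Y, hYY₁.trans hY₁X, hY, Finset.forall_mem_insert _ _ _ |>.2 ⟨hmono i hYY₁ hP, hPI⟩⟩

/-- Diagonal fusion: `Y = {y₀ < y₁ < ⋯}` with `yₙ = min Wₙ`, where `Wₙ₊₁ ⊆ Wₙ / yₙ` satisfies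
`Φ t` for every `t ⊆ [0, yₙ]`; then `Y / t ⊆ Wₙ₊₁` whenever `max t = yₙ`. -/
theorem exists_fusion {Φ : Finset ℕ → Set ℕ → Prop}
    (hmono : ∀ t ⦃Y Y' : Set ℕ⦄, Y' ⊆ Y → Φ t Y → Φ t Y')
    (hdense : ∀ t (X : Set ℕ), X.Infinite → ∃ Y ⊆ X, Y.Infinite ∧ Φ t Y)
    {X : Set ℕ} (hX : X.Infinite) :
    ∃ Y ⊆ X, Y.Infinite ∧ ∀ t : Finset ℕ, ↑t ⊆ Y → Φ t (above t Y) := by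
  have hstep : ∀ W : Set ℕ, W.Infinite → ∃ W' ⊆ above {sInf W} W, W'.Infinite ∧
      ∀ t ∈ (Finset.range (sInf W + 1)).powerset, Φ t W' := fun W hW =>
    exists_forall_mem_of_dense hmono hdense _ hW.above
  choose! next hnext_sub hnext_inf hnext using hstep
  obtain ⟨X₀, hX₀X, hX₀, hΦ₀⟩ := hdense ∅ X hX
  set W : ℕ → Set ℕ := fun n => next^[n] X₀
  have hW_succ (n : ℕ) : W (n + 1) = next (W n) := Function.iterate_succ_apply' _ _ _
  have hW_inf (n : ℕ) : (W n).Infinite := by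
    induction n with
    | zero => exact hX₀
    | succ n ih => exact hW_succ n ▸ hnext_inf _ ih
  have hW_sub (n : ℕ) : W (n + 1) ⊆ above {sInf (W n)} (W n) := hW_succ n ▸ hnext_sub _ (hW_inf n)
  have hW_anti : Antitone W := antitone_nat_of_succ_le fun n => (hW_sub n).trans above_subset
  set y : ℕ → ℕ := fun n => sInf (W n)
  have hy_mem (n : ℕ) : y n ∈ W n := Nat.sInf_mem (hW_inf n).nonempty
  have hy_mono : StrictMono y := strictMono_nat_of_lt_succ fun n =>
    (hW_sub n (hy_mem (n + 1))).2 _ (Finset.mem_singleton_self _)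
  have hY₀ : range y ⊆ X₀ := range_subset_iff.2 fun n => hW_anti n.zero_le (hy_mem n)
  refine ⟨range y, hY₀.trans hX₀X, infinite_range_of_injective hy_mono.injective, fun t ht => ?_⟩
  rcases t.eq_empty_or_nonempty with rfl | hne
  · simpa using hmono ∅ hY₀ hΦ₀
  obtain ⟨n, hn⟩ := ht (t.max'_mem hne)
  have ht_mem : t ∈ (Finset.range (y n + 1)).powerset := Finset.mem_powerset.2 fun a ha =>
    Finset.mem_range_succ_iff.2 (hn ▸ t.le_max' a ha)
  refine hmono t ?_ (hW_succ n ▸ hnext _ (hW_inf n) t ht_mem)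
  rintro _ ⟨⟨m, rfl⟩, hm⟩
  exact hW_anti (hy_mono.lt_iff_lt.1 (hn ▸ hm _ (t.max'_mem hne))) (hy_mem m)

end Fusion

section GalvinPrikry

variable {𝒪 : Set BaireSp} {s : Finset ℕ} {X Y : Set ℕ}

lemma exists_forall_accepts_or_rejects (𝒪 : Set BaireSp) (s : Finset ℕ) (hX : X.Infinite) :
    ∃ Y ⊆ X, Y.Infinite ∧ ∀ t : Finset ℕ, ↑t ⊆ Y →
      Accepts 𝒪 (s ∪ t) (above t Y) ∨ Rejects 𝒪 (s ∪ t) (above t Y) := by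
  refine exists_fusion (fun t _ _ h => Or.imp (·.anti h) (·.anti h)) (fun t X hX => ?_) hX
  by_cases hrej : Rejects 𝒪 (s ∪ t) X
  · exact ⟨X, subset_rfl, hX, Or.inr hrej⟩
  · obtain ⟨V, hVX, hV, hacc⟩ : ∃ V ⊆ X, V.Infinite ∧ Accepts 𝒪 (s ∪ t) V := by
      simpa [Rejects] using hrej
    exact ⟨V, hVX, hV, Or.inl hacc⟩

lemma exists_forall_lt_of_mem_above (g : Finset ℕ → ℕ) (hX : X.Infinite) :
    ∃ Y ⊆ X, Y.Infinite ∧ ∀ t : Finset ℕ, ↑t ⊆ Y → ∀ y ∈ above t Y, g t < y :=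
  exists_fusion (Φ := fun t Z => ∀ z ∈ Z, g t < z) (fun _ _ _ h hZ z hz => hZ z (h hz))
    (fun t X hX => ⟨above {g t} X, above_subset, hX.above,
      fun _ hz => hz.2 _ (Finset.mem_singleton_self _)⟩) hX

lemma exists_forall_rejects (hY : Y.Infinite)
    (hdec : ∀ t : Finset ℕ, ↑t ⊆ Y →
      Accepts 𝒪 (s ∪ t) (above t Y) ∨ Rejects 𝒪 (s ∪ t) (above t Y))
    (hrej : Rejects 𝒪 s Y) :
    ∃ Y' ⊆ Y, Y'.Infinite ∧ ∀ t : Finset ℕ, ↑t ⊆ Y' → Rejects 𝒪 (s ∪ t) (above t Y') := by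
  classical
  have hbound (t : Finset ℕ) : ∃ b, Rejects 𝒪 (s ∪ t) (above t Y) → ∀ m ∈ above t Y, b < m →
      ¬ Accepts 𝒪 (s ∪ insert m t) (above (insert m t) Y) := by
    by_cases h : Rejects 𝒪 (s ∪ t) (above t Y)
    · obtain ⟨b, hb⟩ := h.finite_setOf_accepts.bddAbove
      refine ⟨b, fun _ m hm hbm hacc => (hbm.trans_le (hb ⟨hm, ?_⟩)).false⟩
      rwa [Finset.union_insert, above_insert] at hacc
    · exact ⟨0, fun h' => absurd h' h⟩
  choose g hg using hbound
  obtain ⟨Y', hY'Y, hY', hgY'⟩ := exists_forall_lt_of_mem_above g hY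
  suffices h : ∀ t : Finset ℕ, ↑t ⊆ Y' → Rejects 𝒪 (s ∪ t) (above t Y) from
    ⟨Y', hY'Y, hY', fun t ht => (h t ht).anti (above_mono hY'Y)⟩
  intro t
  induction t using Finset.induction_on_max with
  | empty => simpa using hrej
  | insert a t hlt ih =>
    intro ht
    rw [Finset.coe_insert, insert_subset_iff] at ht
    have ha : a ∈ above t Y' := ⟨ht.1, hlt⟩
    refine (hdec _ ((Finset.coe_insert a t ▸ insert_subset ht.1 ht.2).trans hY'Y)).resolve_left ?_
    exact hg t (ih ht.2) a (above_mono hY'Y ha) (hgY' t ht.2 a ha)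

/-- Every `Z ∈ 𝒪 ∩ [s, s ∪ Y]` would make some initial segment `s ∪ t` of `Z` accepted by
`Z \ (s ∪ t) ⊆ Y / t`. -/
lemma IsOpen.accepts_compl_of_forall_rejects (h𝒪 : IsOpen 𝒪)
    (h : ∀ t : Finset ℕ, ↑t ⊆ Y → Rejects 𝒪 (s ∪ t) (above t Y)) : Accepts 𝒪ᶜ s Y := by
  classical
  intro Z hsZ hZY hZ𝒪
  obtain ⟨u, hsu, huZ, hacc⟩ := h𝒪.exists_accepts hZ𝒪 hsZ
  have hu : s ∪ (u \ s) = u := Finset.union_sdiff_of_subset hsu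
  have ht : ↑(u \ s) ⊆ Y := fun a ha => by
    rw [Finset.coe_sdiff] at ha
    exact (hZY (huZ.1 ha.1)).resolve_left ha.2
  have hsub : Z.1 \ ↑u ⊆ above (u \ s) Y := by
    simpa only [hu] using (hu.symm ▸ huZ : InitSeg (s ∪ (u \ s)) Z.1).diff_subset_above hZY
  exact (hu ▸ h _ ht) _ hsub (Z.2.sdiff u.finite_toSet) (hacc.anti sdiff_subset)

end GalvinPrikry

lemma completelyRamsey_iff {𝒳 : Set BaireSp} :
    CompletelyRamsey 𝒳 ↔ ∀ (s : Finset ℕ) (X : Set ℕ), X.Infinite →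
      ∃ Y ⊆ X, Y.Infinite ∧ (Accepts 𝒳 s Y ∨ Accepts 𝒳ᶜ s Y) := by
  simp only [CompletelyRamsey, ← subset_compl_iff_disjoint_right.trans disjoint_iff_inter_eq_empty]
  constructor
  · intro h s X hX
    obtain ⟨Y, hYX, hsY, hcube⟩ := h s ⟨_, hX.above.mono subset_union_right⟩
      (initSeg_union_of_forall_lt fun _ hy => hy.2)
    have hYX' : Y.1 \ ↑s ⊆ X := fun y hy => ((hYX hy.1).resolve_left hy.2).1
    have hacc {𝒴 : Set BaireSp} (h𝒴 : ellCube s Y ⊆ 𝒴) : Accepts 𝒴 s (Y.1 \ ↑s) :=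
      fun Z hZs hZY => h𝒴 ⟨(hZY.trans union_sdiff_self.subset).trans (union_subset hsY.1 subset_rfl), hZs⟩
    exact ⟨_, hYX', Y.2.sdiff s.finite_toSet, hcube.imp hacc hacc⟩
  · intro h s X hsX
    obtain ⟨Y, hYX, hY, hacc⟩ := h s (above s X.1) X.2.above
    refine ⟨⟨_, hY.mono subset_union_right⟩, union_subset hsX.1 (hYX.trans above_subset),
      initSeg_union_of_forall_lt fun y hy => (hYX hy).2, ?_⟩
    exact hacc.imp (accepts_iff_ellCube_subset hY).1 (accepts_iff_ellCube_subset hY).1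

theorem IsOpen.completelyRamsey {𝒪 : Set BaireSp} (h𝒪 : IsOpen 𝒪) : CompletelyRamsey 𝒪 := by
  refine completelyRamsey_iff.2 fun s X hX => ?_
  obtain ⟨Y, hYX, hY, hdec⟩ := exists_forall_accepts_or_rejects 𝒪 s hX
  rcases hdec ∅ (by simp) with hacc | hrej
  · exact ⟨Y, hYX, hY, Or.inl (by simpa using hacc)⟩
  · obtain ⟨Y', hY'Y, hY', hrej'⟩ := exists_forall_rejects hY hdec (by simpa using hrej)
    exact ⟨Y', hY'Y.trans hYX, hY', Or.inr (h𝒪.accepts_compl_of_forall_rejects hrej')⟩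

section RamseyNull

/-- Every cube `[s, s ∪ X]` contains a cube `[s, s ∪ Y]` missing `M`. -/
def RamseyNull (M : Set BaireSp) : Prop :=
  ∀ (s : Finset ℕ) (X : Set ℕ), X.Infinite → ∃ Y ⊆ X, Y.Infinite ∧ Accepts Mᶜ s Y

variable {M S : Set BaireSp}

lemma RamseyNull.mono (h : RamseyNull M) (hSM : S ⊆ M) : RamseyNull S := fun s X hX =>
  (h s X hX).imp fun _ ⟨hYX, hY, hacc⟩ => ⟨hYX, hY, hacc.mono (compl_subset_compl.2 hSM)⟩

lemma RamseyNull.iUnion {N : ℕ → Set BaireSp} (h : ∀ k, RamseyNull (N k)) :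
    RamseyNull (⋃ k, N k) := by
  intro s X hX
  obtain ⟨Y, hYX, hY, hacc⟩ := exists_fusion
    (Φ := fun t Z => ∀ k ∈ Finset.range (t.sup id + 1), Accepts (N k)ᶜ (s ∪ t) Z)
    (fun _ _ _ hY' hZ k hk => (hZ k hk).anti hY')
    (fun t X hX => exists_forall_mem_of_dense (fun _ _ _ h hZ => hZ.anti h)
      (fun k => h k (s ∪ t)) _ hX) hX
  refine ⟨Y, hYX, hY, fun Z hsZ hZY hZN => ?_⟩
  obtain ⟨k, hk⟩ := mem_iUnion.1 hZN
  obtain ⟨t, htZ, hkt, hst⟩ := hsZ.exists_extend Z.2 k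
  have htY : ↑t ⊆ Y := fun a ha => (hZY (htZ ha).1).resolve_left (htZ ha).2
  refine hacc t htY k (Finset.mem_range_succ_iff.2 hkt) Z hst (fun z hz => ?_) hk
  exact (em _).imp id fun hzst => hst.diff_subset_above hZY ⟨hz, hzst⟩

lemma RamseyNull.sUnion {𝒮 : Set (Set BaireSp)} (h𝒮 : 𝒮.Countable) (h : ∀ N ∈ 𝒮, RamseyNull N) :
    RamseyNull (⋃₀ 𝒮) := by
  rcases 𝒮.eq_empty_or_nonempty with rfl | hne
  · exact fun _ X hX => ⟨X, subset_rfl, hX, fun _ _ _ => by simp⟩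
  · obtain ⟨N, rfl⟩ := h𝒮.exists_eq_range hne
    rw [sUnion_range]
    exact RamseyNull.iUnion fun k => h _ (mem_range_self k)

lemma IsNowhereDense.ramseyNull (hM : IsNowhereDense M) : RamseyNull M := by
  intro u X hX
  obtain ⟨Y, hYX, hY, hacc | hacc⟩ := completelyRamsey_iff.1
    isClosed_closure.isOpen_compl.completelyRamsey u (above u X) hX.above
  · exact ⟨Y, hYX.trans above_subset, hY, hacc.mono (compl_subset_compl.2 subset_closure)⟩
  · rw [compl_compl] at hacc
    have hsub := interior_mono ((accepts_iff_ellCube_subset hY).1 hacc)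
    rw [(isOpen_ellCube _ _).interior_eq, hM] at hsub
    exact absurd (hsub (mem_ellCube_union hY fun y hy => (hYX hy).2)) (notMem_empty _)

lemma IsMeagre.ramseyNull (hM : IsMeagre M) : RamseyNull M := by
  obtain ⟨𝒮, hnwd, h𝒮, hM𝒮⟩ := isMeagre_iff_countable_union_isNowhereDense.1 hM
  exact (RamseyNull.sUnion h𝒮 fun N hN => (hnwd N hN).ramseyNull).mono hM𝒮

lemma RamseyNull.isNowhereDense (hM : RamseyNull M) : IsNowhereDense M := by
  refine eq_empty_iff_forall_notMem.2 fun Z hZ => ?_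
  obtain ⟨_, ⟨t, W, rfl⟩, ⟨hZW, htZ⟩, hW⟩ :=
    isTopologicalBasis_ellCube.exists_subset_of_mem_open hZ isOpen_interior
  obtain ⟨Y, hYZ, hY, hacc⟩ := hM t (above t Z.1) Z.2.above
  have hV := mem_ellCube_union hY fun y hy => (hYZ hy).2
  have hVW : ellCube t ⟨↑t ∪ Y, hY.mono subset_union_right⟩ ⊆ ellCube t W := fun Z' hZ' =>
    ⟨hZ'.1.trans ((union_subset htZ.1 (hYZ.trans above_subset)).trans hZW), hZ'.2⟩
  obtain ⟨Z', hZ'V, hZ'M⟩ :=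
    mem_closure_iff.1 (interior_subset (hW (hVW hV))) _ (isOpen_ellCube _ _) hV
  exact (accepts_iff_ellCube_subset hY).1 hacc hZ'V hZ'M

end RamseyNull

section CompletelyRamsey

variable {𝒳 U : Set BaireSp}

lemma CompletelyRamsey.ramseyNull_diff_interior (h : CompletelyRamsey 𝒳) :
    RamseyNull (𝒳 \ interior 𝒳) := by
  intro s X hX
  obtain ⟨Y, hYX, hY, hacc | hacc⟩ := completelyRamsey_iff.1 h s X hX
  · exact ⟨Y, hYX, hY, (hacc.interior hY).mono fun _ hZ hZ' => hZ'.2 hZ⟩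
  · exact ⟨Y, hYX, hY, hacc.mono fun _ hZ hZ' => hZ hZ'.1⟩

lemma CompletelyRamsey.of_ramseyNull_symmDiff (hU : CompletelyRamsey U)
    (hM : RamseyNull (symmDiff 𝒳 U)) : CompletelyRamsey 𝒳 := by
  refine completelyRamsey_iff.2 fun s X hX => ?_
  obtain ⟨Y₁, hY₁X, hY₁, hnull⟩ := hM s X hX
  obtain ⟨Y, hYY₁, hY, hUacc⟩ := completelyRamsey_iff.1 hU s Y₁ hY₁
  refine ⟨Y, hYY₁.trans hY₁X, hY, hUacc.imp (fun hacc => ?_) fun hacc => ?_⟩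
  · refine ((hnull.anti hYY₁).inter hacc).mono fun Z ⟨hZ, hZU⟩ => ?_
    by_contra hZ𝒳
    exact hZ (mem_symmDiff.2 (Or.inr ⟨hZU, hZ𝒳⟩))
  · refine ((hnull.anti hYY₁).inter hacc).mono fun Z ⟨hZ, hZU⟩ hZ𝒳 => ?_
    exact hZ (mem_symmDiff.2 (Or.inl ⟨hZ𝒳, hZU⟩))

end CompletelyRamsey

/-- Ellentuck's theorem: a subset of `[ℕ]^ω` is completely Ramsey iff it has
the property of Baire in the Ellentuck topology. -/
theorem ellentuck (𝒳 : Set BaireSp) :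
    CompletelyRamsey 𝒳 ↔ EllBaireProperty 𝒳 := by
  refine ⟨fun h => ⟨interior 𝒳, isOpen_interior, ?_⟩, fun ⟨U, hU, hM⟩ => ?_⟩
  · rw [symmDiff_of_ge interior_subset]
    exact h.ramseyNull_diff_interior.isNowhereDense.isMeagre
  · exact hU.completelyRamsey.of_ramseyNull_symmDiff hM.ramseyNull
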